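/- arXiv:1909.13749 — 2 statements merged into one kernel-verified Lean document; each statement's English description precedes it below -/
import Mathlib

section
/- Hyperbolicity is a quasi-isometry invariant: if G and H are connected locally finite graphs, G is δ-hyperbolic for some δ ≥ 0, and G is quasi-isometric to H, then H is δ'-hyperbolic for some δ' ≥ 0 depending only on δ and the quasi-isometry constants. -/
/-- `φ` is a `(γ, c)`-quasi-isometry from `G` to `H`. -/
def SimpleGraph.IsQuasiIsometry {V W : Type} (G : SimpleGraph V) (H : SimpleGraph W)
    (φ : V → W) (γ c : ℝ) : Prop :=
  1 ≤ γ ∧ 0 ≤ c ∧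
    (∀ u v : V,
      γ⁻¹ * (G.dist u v : ℝ) - c ≤ (H.dist (φ u) (φ v) : ℝ) ∧
      (H.dist (φ u) (φ v) : ℝ) ≤ γ * (G.dist u v : ℝ) + c) ∧
    ∀ w : W, ∃ v : V, (H.dist w (φ v) : ℝ) ≤ c

/-- `G` is `δ`-hyperbolic: every side of a geodesic triangle lies within
distance `δ` of the union of the other two sides. -/
def SimpleGraph.IsDeltaHyperbolic {V : Type} (G : SimpleGraph V) (δ : ℝ) : Prop :=
  ∀ (x y z : V) (p1 : G.Walk x y) (p2 : G.Walk y z) (p3 : G.Walk x z),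
    p1.length = G.dist x y → p2.length = G.dist y z → p3.length = G.dist x z →
    ∀ v ∈ p1.support, ∃ w : V, (w ∈ p2.support ∨ w ∈ p3.support) ∧ (G.dist v w : ℝ) ≤ δ

/-!
A quasi-isometry `φ : G → H` has a coarse inverse `ψ : H → G`, and `ψ` is a quasi-isometric
embedding; so it suffices that hyperbolicity pulls back along quasi-isometric embeddings. The
image under `ψ` of a geodesic of `H` is a quasi-geodesic of `G`, and by the Morse lemma it is
uniformly close to a geodesic of `G` with the same endpoints, in both directions. A geodesic
triangle of `H` is thus mapped close to a geodesic triangle of `G`, which is thin.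

The Morse lemma rests on the exponential divergence of geodesics: a geodesic lies within
`δ k + 1` of any path of length `2 ^ k` with the same endpoints. If a vertex `v` of the geodesic
is at maximal distance `D` from the quasi-geodesic, a detour around `v` through the
quasi-geodesic has length `O(D)` and yet stays about `D` away from `v`, so `D ≲ δ log₂ D`.
-/

lemma Nat.sq_le_two_pow {k : ℕ} (hk : 4 ≤ k) : k ^ 2 ≤ 2 ^ k := by
  induction k, hk using Nat.le_induction with
  | base => norm_num
  | succ k hk ih => rw [pow_succ 2]; nlinarith

lemma Nat.le_of_two_pow_pred_lt_mul {k C : ℕ} (h : 2 ^ (k - 1) < C * k) : k ≤ 2 * C + 3 := by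
  by_contra! hk
  obtain ⟨m, rfl⟩ : ∃ m, k = m + 1 := ⟨k - 1, by omega⟩
  have hsq := Nat.sq_le_two_pow (k := m + 1) (by omega)
  rw [Nat.add_sub_cancel] at h
  rw [sq, pow_succ] at hsq
  have : (m + 1) * (m + 1) < 2 * C * (m + 1) := by linarith
  have := Nat.lt_of_mul_lt_mul_right this
  omega

lemma Nat.le_of_le_mul_clog {D N A B E : ℕ} (h : D ≤ N * Nat.clog 2 (A * D + B) + E) :
    D ≤ N * (2 * (A * N + A * E + B) + 3) + E := by
  rcases Nat.eq_zero_or_pos (Nat.clog 2 (A * D + B)) with hk | hk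
  · rw [hk] at h
    omega
  have hx : 1 < A * D + B := by
    by_contra! hx
    rw [Nat.clog_of_right_le_one hx] at hk
    omega
  have hlt := Nat.pow_pred_clog_lt_self one_lt_two hx
  generalize Nat.clog 2 (A * D + B) = k at h hk hlt
  have hAD : A * D + B ≤ (A * N + A * E + B) * k := by
    have := Nat.mul_le_mul_left A h
    have := Nat.le_mul_of_pos_right (A * E) hk
    have := Nat.le_mul_of_pos_right B hk
    nlinarith
  have := Nat.le_of_two_pow_pred_lt_mul (hlt.trans_le hAD)
  calc D ≤ N * k + E := h
    _ ≤ N * (2 * (A * N + A * E + B) + 3) + E := by gcongr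

namespace SimpleGraph

section Geodesic

variable {V : Type*} {G : SimpleGraph V} {a b : V}

lemma Walk.dist_getVert_getVert {p : G.Walk a b} (hp : p.length = G.dist a b) {i j : ℕ}
    (hij : i ≤ j) (hj : j ≤ p.length) : G.dist (p.getVert i) (p.getVert j) = j - i := by
  have h := length_eq_dist_of_subwalk hp
    (((p.drop i).isSubwalk_take (j - i)).trans (p.isSubwalk_drop i))
  rw [Walk.take_length, Walk.drop_length, Walk.drop_getVert, Nat.add_sub_cancel' hij] at h
  omega

lemma Walk.dist_add_dist_of_mem_support {p : G.Walk a b} (hp : p.length = G.dist a b) {u : V}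
    (hu : u ∈ p.support) : G.dist a u + G.dist u b = G.dist a b := by
  obtain ⟨t, rfl, ht⟩ := Walk.mem_support_iff_exists_getVert.mp hu
  have h₁ := p.dist_getVert_getVert hp (Nat.zero_le t) ht
  have h₂ := p.dist_getVert_getVert hp ht le_rfl
  rw [Walk.getVert_zero] at h₁
  rw [Walk.getVert_length] at h₂
  omega

lemma Connected.exists_walk_length_eq_dist_of_dist_add_dist (hG : G.Connected) {v : V}
    (hv : G.dist a v + G.dist v b = G.dist a b) :
    ∃ g : G.Walk a b, g.length = G.dist a b ∧ v ∈ g.support := by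
  obtain ⟨g₁, hg₁⟩ := hG.exists_walk_length_eq_dist a v
  obtain ⟨g₂, hg₂⟩ := hG.exists_walk_length_eq_dist v b
  refine ⟨g₁.append g₂, by rw [Walk.length_append, hg₁, hg₂, hv], ?_⟩
  exact (Walk.mem_support_append_iff _ _).mpr (.inl g₁.end_mem_support)

lemma Connected.dist_le_dist_add_dist_add_dist (hG : G.Connected) (a a' b' b : V) :
    G.dist a b ≤ G.dist a a' + G.dist a' b' + G.dist b' b := by
  have := hG.dist_triangle (u := a) (v := a') (w := b)
  have := hG.dist_triangle (u := a') (v := b') (w := b)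
  omega

end Geodesic

section Hyperbolic

variable {V : Type} {G : SimpleGraph V}

lemma IsDeltaHyperbolic.mono {δ δ' : ℝ} (h : G.IsDeltaHyperbolic δ) (hδ : δ ≤ δ') :
    G.IsDeltaHyperbolic δ' := fun x y z p₁ p₂ p₃ h₁ h₂ h₃ v hv =>
  (h x y z p₁ p₂ p₃ h₁ h₂ h₃ v hv).imp fun _ ⟨hw, hvw⟩ => ⟨hw, hvw.trans hδ⟩

-- Halve `p` at its vertex `m` and use the thin geodesic triangle on `a`, `b`, `m`.
theorem IsDeltaHyperbolic.exists_dist_le_of_length_le_two_pow (hG : G.Connected) {N : ℕ}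
    (hyp : G.IsDeltaHyperbolic N) (k : ℕ) :
    ∀ {a b v : V} (p : G.Walk a b), p.length ≤ 2 ^ k →
      G.dist a v + G.dist v b = G.dist a b → ∃ u ∈ p.support, G.dist v u ≤ N * k + 1 := by
  induction k with
  | zero =>
    intro a b v p hp hv
    have := dist_le p
    refine ⟨a, p.start_mem_support, ?_⟩
    rw [dist_comm]
    simp only [pow_zero] at hp
    omega
  | succ k ih =>
    intro a b v p hp hv
    set m := p.getVert (2 ^ k)
    obtain ⟨g, hg, hvg⟩ := hG.exists_walk_length_eq_dist_of_dist_add_dist hv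
    obtain ⟨g₁, hg₁⟩ := hG.exists_walk_length_eq_dist b m
    obtain ⟨g₂, hg₂⟩ := hG.exists_walk_length_eq_dist a m
    obtain ⟨w, hw, hvw⟩ := hyp a b m g g₁ g₂ hg hg₁ hg₂ v hvg
    have hvw : G.dist v w ≤ N := by exact_mod_cast hvw
    obtain ⟨u, hu, hwu⟩ : ∃ u ∈ p.support, G.dist w u ≤ N * k + 1 := by
      rcases hw with hw | hw
      · have hb : G.dist m w + G.dist w b = G.dist m b := by
          have := g₁.dist_add_dist_of_mem_support hg₁ hw
          rw [dist_comm (u := m), dist_comm (u := m), dist_comm (u := w) (v := b)]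
          omega
        obtain ⟨u, hu, h⟩ := ih (p.drop (2 ^ k)) (by rw [Walk.drop_length]; omega) hb
        exact ⟨u, (p.isSubwalk_drop _).support_subset hu, h⟩
      · obtain ⟨u, hu, h⟩ := ih (p.take (2 ^ k)) (by rw [Walk.take_length]; omega)
          (g₂.dist_add_dist_of_mem_support hg₂ hw)
        exact ⟨u, (p.isSubwalk_take _).support_subset hu, h⟩
    have := hG.dist_triangle (u := v) (v := w) (w := u)
    exact ⟨u, hu, by rw [Nat.mul_succ]; omega⟩

end Hyperbolic

section QuasiGeodesic

variable {V : Type*} {G : SimpleGraph V}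

lemma Connected.exists_walk_near_seq (hG : G.Connected) (q : ℕ → V) {S i j : ℕ} (hij : i ≤ j)
    (hstep : ∀ t < j, G.dist (q t) (q (t + 1)) ≤ S) :
    ∃ w : G.Walk (q i) (q j), w.length ≤ (j - i) * S ∧
      ∀ u ∈ w.support, ∃ t ≤ j, G.dist u (q t) ≤ S := by
  induction j, hij using Nat.le_induction with
  | base => exact ⟨.nil, by simp, fun u hu => ⟨i, le_rfl, by simp_all⟩⟩
  | succ j hij ih =>
    obtain ⟨w, hw, hnear⟩ := ih fun t ht => hstep t (by omega)
    obtain ⟨e, he⟩ := hG.exists_walk_length_eq_dist (q j) (q (j + 1))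
    have hS := hstep j (by omega)
    refine ⟨w.append e, ?_, fun u hu => ?_⟩
    · rw [Walk.length_append, he, Nat.succ_sub hij, Nat.succ_mul]
      omega
    · rcases (Walk.mem_support_append_iff _ _).mp hu with hu | hu
      · obtain ⟨t, ht, h⟩ := hnear u hu
        exact ⟨t, by omega, h⟩
      · have := e.dist_add_dist_of_mem_support he hu
        exact ⟨j + 1, le_rfl, by omega⟩

lemma Walk.exists_getVert_near_before_and_after (hG : G.Connected) {q : ℕ → V} {n D : ℕ}
    {g : G.Walk (q 0) (q n)}
    (hnear : ∀ v ∈ g.support, ∃ i ≤ n, G.dist v (q i) ≤ D) {i : ℕ} (hi : i ≤ n) :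
    ∃ t, ∃ j₁ ≤ i, ∃ j₂, i ≤ j₂ ∧ j₂ ≤ n ∧
      G.dist (g.getVert t) (q j₁) ≤ D ∧ G.dist (g.getVert t) (q j₂) ≤ D + 1 := by
  classical
  let P t := ∃ j ≤ i, G.dist (g.getVert t) (q j) ≤ D
  set t := Nat.findGreatest P g.length
  obtain ⟨j₁, hj₁, h₁⟩ : P t := Nat.findGreatest_spec (Nat.zero_le _) ⟨0, Nat.zero_le i, by simp⟩
  refine ⟨t, j₁, hj₁, ?_⟩
  rcases (Nat.findGreatest_le (P := P) g.length).eq_or_lt with htL | htL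
  · exact ⟨n, hi, le_rfl, h₁, by simp [t, htL]⟩
  obtain ⟨j₂, hj₂, h₂⟩ := hnear _ (g.getVert_mem_support (t + 1))
  have hij₂ : i < j₂ := by
    by_contra! h
    exact Nat.findGreatest_is_greatest (lt_add_one t) htL ⟨j₂, h, h₂⟩
  have := hG.dist_triangle (u := g.getVert t) (v := g.getVert (t + 1)) (w := q j₂)
  rw [dist_eq_one_iff_adj.mpr (g.adj_getVert_succ htL)] at this
  exact ⟨j₂, hij₂.le, hj₂, h₁, by omega⟩

variable (G) in
def IsQuasiGeodesic (q : ℕ → V) (n Γ C : ℕ) : Prop :=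
  ∀ i j, i ≤ j → j ≤ n →
    j - i ≤ Γ * G.dist (q i) (q j) + C ∧ G.dist (q i) (q j) ≤ Γ * (j - i) + C

namespace IsQuasiGeodesic

variable {q : ℕ → V} {n Γ C : ℕ}

lemma sub_le (hq : G.IsQuasiGeodesic q n Γ C) {i j : ℕ} (hj : j ≤ n) :
    j - i ≤ Γ * G.dist (q i) (q j) + C := by
  rcases le_total i j with hij | hji
  · exact (hq i j hij hj).1
  · omega

lemma dist_succ_le (hq : G.IsQuasiGeodesic q n Γ C) {t : ℕ} (ht : t < n) :
    G.dist (q t) (q (t + 1)) ≤ Γ + C := by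
  simpa using (hq t (t + 1) (by omega) ht).2

lemma exists_walk_near (hG : G.Connected) (hq : G.IsQuasiGeodesic q n Γ C) {i j : ℕ}
    (hi : i ≤ n) (hj : j ≤ n) :
    ∃ w : G.Walk (q i) (q j), w.length ≤ (Γ * G.dist (q i) (q j) + C) * (Γ + C) ∧
      ∀ u ∈ w.support, ∃ t ≤ n, G.dist u (q t) ≤ Γ + C := by
  wlog hij : i ≤ j generalizing i j
  · obtain ⟨w, hw, hnear⟩ := this hj hi (by omega)
    refine ⟨w.reverse, by rwa [Walk.length_reverse, dist_comm], fun u hu => hnear u ?_⟩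
    rwa [Walk.support_reverse, List.mem_reverse] at hu
  obtain ⟨w, hw, hnear⟩ :=
    hG.exists_walk_near_seq q hij fun t ht => hq.dist_succ_le (ht.trans_le hj)
  refine ⟨w, hw.trans (Nat.mul_le_mul_right _ (hq.sub_le hj)), fun u hu => ?_⟩
  obtain ⟨t, ht, h⟩ := hnear u hu
  exact ⟨t, ht.trans hj, h⟩

variable {D : ℕ}

theorem exists_mem_support_dist_le (hG : G.Connected) (hq : G.IsQuasiGeodesic q n Γ C)
    {g : G.Walk (q 0) (q n)} (hnear : ∀ v ∈ g.support, ∃ i ≤ n, G.dist v (q i) ≤ D)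
    {i : ℕ} (hi : i ≤ n) :
    ∃ u ∈ g.support, G.dist (q i) u ≤ D + Γ * (Γ * (2 * D + 1) + C) + C := by
  obtain ⟨t, j₁, hj₁, j₂, hij₂, hj₂, h₁, h₂⟩ := g.exists_getVert_near_before_and_after hG hnear hi
  have hj₁₂ : G.dist (q j₁) (q j₂) ≤ 2 * D + 1 := by
    have := hG.dist_triangle (u := q j₁) (v := g.getVert t) (w := q j₂)
    have : G.dist (q j₁) (g.getVert t) = G.dist (g.getVert t) (q j₁) := dist_comm
    omega
  have hsub : i - j₁ ≤ Γ * (2 * D + 1) + C := by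
    have := hq.sub_le (i := j₁) hj₂
    have := Nat.mul_le_mul_left Γ hj₁₂
    omega
  have hij₁ : G.dist (q j₁) (q i) ≤ Γ * (Γ * (2 * D + 1) + C) + C :=
    (hq j₁ i hj₁ hi).2.trans (by gcongr)
  refine ⟨g.getVert t, g.getVert_mem_support t, ?_⟩
  have := hG.dist_triangle (u := q i) (v := q j₁) (w := g.getVert t)
  have : G.dist (q i) (q j₁) = G.dist (q j₁) (q i) := dist_comm
  have : G.dist (q j₁) (g.getVert t) = G.dist (g.getVert t) (q j₁) := dist_comm
  omega

-- The second condition in `hw₁` keeps the geodesic from `w₁` to `q i` at distance `D` from `v`.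
lemma exists_detour (hG : G.Connected) (hq : G.IsQuasiGeodesic q n Γ C) {v : V}
    (hfar : ∀ i ≤ n, D ≤ G.dist v (q i)) {w₁ w₂ : V}
    (hw₁ : ∃ i ≤ n, G.dist w₁ (q i) ≤ D ∧ D + G.dist w₁ (q i) ≤ G.dist v w₁)
    (hw₂ : ∃ i ≤ n, G.dist w₂ (q i) ≤ D ∧ D + G.dist w₂ (q i) ≤ G.dist v w₂)
    (h₁₂ : G.dist w₁ w₂ ≤ 4 * D) :
    ∃ σ : G.Walk w₁ w₂, σ.length ≤ (2 + 6 * Γ * (Γ + C)) * D + C * (Γ + C) ∧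
      ∀ u ∈ σ.support, D ≤ G.dist v u + (Γ + C) := by
  obtain ⟨i₁, hi₁, hd₁, hv₁⟩ := hw₁
  obtain ⟨i₂, hi₂, hd₂, hv₂⟩ := hw₂
  obtain ⟨c₁, hc₁⟩ := hG.exists_walk_length_eq_dist w₁ (q i₁)
  obtain ⟨c₂, hc₂⟩ := hG.exists_walk_length_eq_dist (q i₂) w₂
  obtain ⟨Q, hQ, hQnear⟩ := hq.exists_walk_near hG hi₁ hi₂
  have hqq : G.dist (q i₁) (q i₂) ≤ 6 * D := by
    have := hG.dist_le_dist_add_dist_add_dist (q i₁) w₁ w₂ (q i₂)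
    have : G.dist (q i₁) w₁ = G.dist w₁ (q i₁) := dist_comm
    have : G.dist w₂ (q i₂) = G.dist (q i₂) w₂ := dist_comm
    omega
  have hQ' : Q.length ≤ (Γ * (6 * D) + C) * (Γ + C) := hQ.trans (by gcongr)
  refine ⟨c₁.append (Q.append c₂), ?_, fun u hu => ?_⟩
  · calc (c₁.append (Q.append c₂)).length = c₁.length + Q.length + c₂.length := by
          simp only [Walk.length_append, add_assoc]
      _ ≤ D + (Γ * (6 * D) + C) * (Γ + C) + D := by rw [dist_comm] at hd₂; omega
      _ = (2 + 6 * Γ * (Γ + C)) * D + C * (Γ + C) := by ring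
  rcases (Walk.mem_support_append_iff _ _).mp hu with hu | hu
  · have := c₁.dist_add_dist_of_mem_support hc₁ hu
    have := hG.dist_triangle (u := v) (v := u) (w := w₁)
    have := hG.dist_triangle (u := v) (v := u) (w := q i₁)
    have := hfar i₁ hi₁
    have : G.dist u w₁ = G.dist w₁ u := dist_comm
    omega
  rcases (Walk.mem_support_append_iff _ _).mp hu with hu | hu
  · obtain ⟨t, ht, hut⟩ := hQnear u hu
    have := hG.dist_triangle (u := v) (v := u) (w := q t)
    have := hfar t ht
    omega
  · have := c₂.dist_add_dist_of_mem_support hc₂ hu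
    have := hG.dist_triangle (u := v) (v := u) (w := w₂)
    have := hG.dist_triangle (u := v) (v := u) (w := q i₂)
    have := hfar i₂ hi₂
    have : G.dist u (q i₂) = G.dist (q i₂) u := dist_comm
    have : G.dist w₂ (q i₂) = G.dist (q i₂) w₂ := dist_comm
    omega

end IsQuasiGeodesic

end QuasiGeodesic

section Morse

variable {V : Type} {G : SimpleGraph V} {q : ℕ → V} {n Γ C D N : ℕ}

-- The bound that `Nat.le_of_le_mul_clog` extracts from the inequality of `le_of_far`.
def morseBound (N Γ C : ℕ) : ℕ :=
  N * (2 * ((2 + 6 * Γ * (Γ + C)) * N + (2 + 6 * Γ * (Γ + C)) * (Γ + C + 1) + C * (Γ + C)) + 3) +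
    (Γ + C + 1)

namespace IsQuasiGeodesic

lemma le_of_far (hG : G.Connected) (hyp : G.IsDeltaHyperbolic N)
    (hq : G.IsQuasiGeodesic q n Γ C) {g : G.Walk (q 0) (q n)}
    (hg : g.length = G.dist (q 0) (q n))
    (hnear : ∀ v ∈ g.support, ∃ i ≤ n, G.dist v (q i) ≤ D) {v : V} (hv : v ∈ g.support)
    (hfar : ∀ i ≤ n, D ≤ G.dist v (q i)) :
    D ≤ N * Nat.clog 2 ((2 + 6 * Γ * (Γ + C)) * D + C * (Γ + C)) + (Γ + C + 1) := by
  obtain ⟨t, rfl, ht⟩ := Walk.mem_support_iff_exists_getVert.mp hv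
  have endpoint : ∀ s, (s = 0 ∨ s = g.length ∨ 2 * D ≤ G.dist (g.getVert t) (g.getVert s)) →
      ∃ i ≤ n, G.dist (g.getVert s) (q i) ≤ D ∧
        D + G.dist (g.getVert s) (q i) ≤ G.dist (g.getVert t) (g.getVert s) := by
    rintro s (rfl | rfl | h)
    · exact ⟨0, Nat.zero_le n, by simp, by simpa using hfar 0 (Nat.zero_le n)⟩
    · exact ⟨n, le_rfl, by simp, by simpa using hfar n le_rfl⟩
    · obtain ⟨i, hi, h'⟩ := hnear _ (g.getVert_mem_support s)
      exact ⟨i, hi, h', by omega⟩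
  set t₁ := t - 2 * D
  set t₂ := min (t + 2 * D) g.length
  have h₁ := g.dist_getVert_getVert hg (i := t₁) (Nat.sub_le t (2 * D)) ht
  have h₂ := g.dist_getVert_getVert hg (i := t) (j := t₂) (by omega) (min_le_right _ _)
  have h₁₂ := g.dist_getVert_getVert hg (i := t₁) (j := t₂) (by omega) (min_le_right _ _)
  obtain ⟨σ, hσ, hσfar⟩ := hq.exists_detour hG hfar
    (endpoint t₁ (by rw [dist_comm]; omega)) (endpoint t₂ (by omega)) (by omega)
  obtain ⟨u, hu, hvu⟩ := hyp.exists_dist_le_of_length_le_two_pow hG _ (v := g.getVert t) σ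
    (hσ.trans (Nat.le_pow_clog one_lt_two _)) (by omega)
  have := hσfar u hu
  omega

theorem exists_dist_le_morseBound (hG : G.Connected) (hyp : G.IsDeltaHyperbolic N)
    (hq : G.IsQuasiGeodesic q n Γ C) {g : G.Walk (q 0) (q n)}
    (hg : g.length = G.dist (q 0) (q n)) :
    ∀ v ∈ g.support, ∃ i ≤ n, G.dist v (q i) ≤ morseBound N Γ C := by
  classical
  have hex : ∃ D, ∀ v ∈ g.support, ∃ i ≤ n, G.dist v (q i) ≤ D := by
    refine ⟨g.length, fun v hv => ⟨0, Nat.zero_le n, ?_⟩⟩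
    have := g.dist_add_dist_of_mem_support hg hv
    rw [dist_comm]
    omega
  suffices h : Nat.find hex ≤ morseBound N Γ C by
    intro v hv
    obtain ⟨i, hi, hvi⟩ := Nat.find_spec hex v hv
    exact ⟨i, hi, hvi.trans h⟩
  rcases Nat.eq_zero_or_pos (Nat.find hex) with h₀ | hpos
  · omega
  obtain ⟨v, hv, hfar⟩ : ∃ v ∈ g.support, ∀ i ≤ n, Nat.find hex ≤ G.dist v (q i) := by
    have := Nat.find_min hex (Nat.sub_one_lt_of_lt hpos)
    push Not at this
    obtain ⟨v, hv, h⟩ := this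
    exact ⟨v, hv, fun i hi => by have := h i hi; omega⟩
  exact Nat.le_of_le_mul_clog (hq.le_of_far hG hyp hg (Nat.find_spec hex) hv hfar)

end IsQuasiGeodesic

end Morse

def IsQuasiIsometricEmbedding {V W : Type*} (H : SimpleGraph W) (G : SimpleGraph V) (ψ : W → V)
    (Γ C : ℕ) : Prop :=
  ∀ a b, H.dist a b ≤ Γ * G.dist (ψ a) (ψ b) + C ∧ G.dist (ψ a) (ψ b) ≤ Γ * H.dist a b + C

section Embedding

variable {V W : Type*} {G : SimpleGraph V} {H : SimpleGraph W} {ψ : W → V} {Γ C : ℕ}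

lemma IsQuasiIsometricEmbedding.isQuasiGeodesic (hψ : H.IsQuasiIsometricEmbedding G ψ Γ C)
    {a b : W} {P : H.Walk a b} (hP : P.length = H.dist a b) :
    G.IsQuasiGeodesic (fun t => ψ (P.getVert t)) P.length Γ C := fun i j hij hj => by
  rw [← P.dist_getVert_getVert hP hij hj]
  exact hψ _ _

end Embedding

section Hyperbolic

variable {V W : Type} {G : SimpleGraph V} {H : SimpleGraph W} {ψ : W → V} {N Γ C : ℕ}

lemma IsQuasiIsometricEmbedding.exists_geodesic_near (hG : G.Connected)
    (hyp : G.IsDeltaHyperbolic N) (hψ : H.IsQuasiIsometricEmbedding G ψ Γ C) {a b : W}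
    {P : H.Walk a b} (hP : P.length = H.dist a b) :
    ∃ g : G.Walk (ψ a) (ψ b), g.length = G.dist (ψ a) (ψ b) ∧
      (∀ u ∈ g.support, ∃ i ≤ P.length, G.dist u (ψ (P.getVert i)) ≤ morseBound N Γ C) ∧
      ∀ i ≤ P.length, ∃ u ∈ g.support, G.dist (ψ (P.getVert i)) u ≤
        morseBound N Γ C + Γ * (Γ * (2 * morseBound N Γ C + 1) + C) + C := by
  have hq := hψ.isQuasiGeodesic hP
  obtain ⟨g, hg⟩ := hG.exists_walk_length_eq_dist (ψ (P.getVert 0)) (ψ (P.getVert P.length))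
  have hnear := hq.exists_dist_le_morseBound hG hyp hg
  have ha : ψ (P.getVert 0) = ψ a := by rw [Walk.getVert_zero]
  have hb : ψ (P.getVert P.length) = ψ b := by rw [Walk.getVert_length]
  refine ⟨g.copy ha hb, by rw [Walk.length_copy, hg, ha, hb],
    fun u hu => hnear u (by simpa using hu), fun i hi => ?_⟩
  obtain ⟨u, hu, h⟩ := hq.exists_mem_support_dist_le hG hnear hi
  exact ⟨u, by simpa using hu, h⟩

-- `Γ (D₀ + N + D₁) + C`, with `D₀ = morseBound N Γ C` and `D₁` the bound of the second half
-- of the Morse lemma.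
def qiHyperbolicityConst (N Γ C : ℕ) : ℕ :=
  Γ * (2 * morseBound N Γ C + Γ * (Γ * (2 * morseBound N Γ C + 1) + C) + C + N) + C

theorem IsDeltaHyperbolic.of_isQuasiIsometricEmbedding (hG : G.Connected)
    (hyp : G.IsDeltaHyperbolic N) (hψ : H.IsQuasiIsometricEmbedding G ψ Γ C) :
    H.IsDeltaHyperbolic (qiHyperbolicityConst N Γ C) := by
  intro x y z p₁ p₂ p₃ h₁ h₂ h₃ v hv
  obtain ⟨g₁, hg₁, -, hclose₁⟩ := hψ.exists_geodesic_near hG hyp h₁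
  obtain ⟨g₂, hg₂, hnear₂, -⟩ := hψ.exists_geodesic_near hG hyp h₂
  obtain ⟨g₃, hg₃, hnear₃, -⟩ := hψ.exists_geodesic_near hG hyp h₃
  obtain ⟨t, rfl, ht⟩ := Walk.mem_support_iff_exists_getVert.mp hv
  obtain ⟨u, hu, hvu⟩ := hclose₁ t ht
  obtain ⟨w, hw, huw⟩ := hyp _ _ _ g₁ g₂ g₃ hg₁ hg₂ hg₃ u hu
  have huw : G.dist u w ≤ N := by exact_mod_cast huw
  have close : ∀ x', G.dist w (ψ x') ≤ morseBound N Γ C →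
      (H.dist (p₁.getVert t) x' : ℝ) ≤ qiHyperbolicityConst N Γ C := by
    intro x' hx'
    have := hG.dist_le_dist_add_dist_add_dist (ψ (p₁.getVert t)) u w (ψ x')
    have hd : G.dist (ψ (p₁.getVert t)) (ψ x') ≤
        2 * morseBound N Γ C + Γ * (Γ * (2 * morseBound N Γ C + 1) + C) + C + N := by omega
    exact_mod_cast (hψ _ x').1.trans (by unfold qiHyperbolicityConst; gcongr)
  rcases hw with hw | hw
  · obtain ⟨i, -, hi⟩ := hnear₂ w hw
    exact ⟨_, .inl (p₂.getVert_mem_support i), close _ hi⟩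
  · obtain ⟨i, -, hi⟩ := hnear₃ w hw
    exact ⟨_, .inr (p₃.getVert_mem_support i), close _ hi⟩

end Hyperbolic

lemma IsQuasiIsometry.exists_isQuasiIsometricEmbedding {V W : Type} {G : SimpleGraph V}
    {H : SimpleGraph W} {φ : V → W} {γ c : ℝ} (hφ : G.IsQuasiIsometry H φ γ c)
    (hH : H.Connected) : ∃ ψ : W → V, H.IsQuasiIsometricEmbedding G ψ ⌈γ⌉₊ ⌈3 * γ * c⌉₊ := by
  obtain ⟨hγ, hc, hdist, hdense⟩ := hφ
  choose ψ hψ using hdense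
  have hψ' : ∀ w, (H.dist (φ (ψ w)) w : ℝ) ≤ c := fun w => by rw [dist_comm]; exact hψ w
  refine ⟨ψ, fun a b => ?_⟩
  obtain ⟨hlow, hup⟩ := hdist (ψ a) (ψ b)
  have t₁ : (H.dist a b : ℝ) ≤
      H.dist a (φ (ψ a)) + H.dist (φ (ψ a)) (φ (ψ b)) + H.dist (φ (ψ b)) b :=
    mod_cast hH.dist_le_dist_add_dist_add_dist _ _ _ _
  have t₂ : (H.dist (φ (ψ a)) (φ (ψ b)) : ℝ) ≤
      H.dist (φ (ψ a)) a + H.dist a b + H.dist b (φ (ψ b)) :=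
    mod_cast hH.dist_le_dist_add_dist_add_dist _ _ _ _
  have := hψ a
  have := hψ' b
  have := hψ' a
  have := hψ b
  have hγ₀ : 0 < γ := one_pos.trans_le hγ
  have hΓ : γ ≤ ⌈γ⌉₊ := Nat.le_ceil γ
  have hC : 3 * γ * c ≤ ⌈3 * γ * c⌉₊ := Nat.le_ceil _
  have hcγ : c ≤ γ * c := le_mul_of_one_le_left hc hγ
  constructor
  · have := mul_le_mul_of_nonneg_right hΓ (Nat.cast_nonneg (G.dist (ψ a) (ψ b)))
    exact_mod_cast (by linarith : (H.dist a b : ℝ) ≤ ⌈γ⌉₊ * G.dist (ψ a) (ψ b) + ⌈3 * γ * c⌉₊)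
  · have := mul_le_mul_of_nonneg_right hΓ (Nat.cast_nonneg (H.dist a b))
    have hG : (G.dist (ψ a) (ψ b) : ℝ) ≤ γ * (H.dist (φ (ψ a)) (φ (ψ b)) + c) := by
      rw [← inv_mul_le_iff₀ hγ₀]
      linarith
    have : γ * (H.dist (φ (ψ a)) (φ (ψ b)) + c) ≤ γ * H.dist a b + 3 * γ * c := by
      nlinarith
    exact_mod_cast (by linarith : (G.dist (ψ a) (ψ b) : ℝ) ≤ ⌈γ⌉₊ * H.dist a b + ⌈3 * γ * c⌉₊)

end SimpleGraph

/-- Hyperbolicity is a quasi-isometry invariant: there is a function `Δ` such that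
whenever `G` is `δ`-hyperbolic and `(γ,c)`-quasi-isometric to `H` (both connected
and locally finite), `H` is `Δ δ γ c`-hyperbolic. -/
theorem hyperbolicity_quasiIsometry_invariant :
    ∃ Δ : ℝ → ℝ → ℝ → ℝ,
      ∀ (V W : Type) (G : SimpleGraph V) (H : SimpleGraph W),
        G.Connected → H.Connected →
        (∀ v, (G.neighborSet v).Finite) → (∀ v, (H.neighborSet v).Finite) →
        ∀ (δ γ c : ℝ) (φ : V → W), 0 ≤ δ →
          G.IsDeltaHyperbolic δ → G.IsQuasiIsometry H φ γ c →
          0 ≤ Δ δ γ c ∧ H.IsDeltaHyperbolic (Δ δ γ c) := by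
  refine ⟨fun δ γ c => SimpleGraph.qiHyperbolicityConst ⌈δ⌉₊ ⌈γ⌉₊ ⌈3 * γ * c⌉₊, ?_⟩
  intro V W G H hG hH _ _ δ γ c φ _ hyp hφ
  obtain ⟨ψ, hψ⟩ := hφ.exists_isQuasiIsometricEmbedding hH
  exact ⟨Nat.cast_nonneg _, (hyp.mono (Nat.le_ceil δ)).of_isQuasiIsometricEmbedding hG hψ⟩
end

section
/- Let G be a connected graph that is a union of subgraphs indexed by the vertices of a tree T, where for each edge uv of T the corresponding subgraphs meet in exactly one vertex and subgraphs corresponding to non-adjacent tree vertices are disjoint (a tree amalgamation of adhesion 1 with disjoint adhesion sets). If a ray R in G meets every one of these subgraphs in only finitely many vertices, then the set of tree vertices whose subgraphs R meets contains the vertex set of a ray in T. -/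
/-- A decomposition of a graph `A` as a tree amalgamation of adhesion 1 over a tree `T`,
with pairwise disjoint adhesion sets: the parts cover `A`, parts of adjacent tree vertices
meet in exactly the identified adhesion (cut) vertex, parts of distinct non-adjacent tree
vertices are disjoint, and every edge of `A` lies in some part. -/
structure TreeAmalgamDecomp {τ V : Type} (T : SimpleGraph τ) (A : SimpleGraph V) where
  part : τ → Set V
  cut : ∀ ⦃t t' : τ⦄, T.Adj t t' → V
  cover : ∀ v : V, ∃ t, v ∈ part t
  adj_inter : ∀ ⦃t t' : τ⦄ (h : T.Adj t t'), part t ∩ part t' = {cut h}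
  nonadj_disjoint : ∀ ⦃t t' : τ⦄, t ≠ t' → ¬ T.Adj t t' → part t ∩ part t' = ∅
  edge_in_part : ∀ ⦃u v : V⦄, A.Adj u v → ∃ t, u ∈ part t ∧ v ∈ part t
  cut_symm : ∀ ⦃t t' : τ⦄ (h : T.Adj t t'), cut h.symm = cut h


/-- A ray: a one-way infinite path. -/
def SimpleGraph.IsRay {V : Type} (G : SimpleGraph V) (r : ℕ → V) : Prop :=
  Function.Injective r ∧ ∀ i, G.Adj (r i) (r (i + 1))

/-- In a connected graph decomposed as a tree amalgamation of adhesion 1 with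
pairwise disjoint adhesion sets, if a ray meets every part in only finitely many
vertices, then the set of tree vertices whose parts it meets contains the vertex
set of a ray of the tree. -/
theorem ray_meeting_parts_finitely_contains_tree_ray {τ V : Type}
    (T : SimpleGraph τ) (A : SimpleGraph V) (htree : T.IsTree) (hAc : A.Connected)
    (D : TreeAmalgamDecomp T A) (R : ℕ → V) (hR : A.IsRay R)
    (hfin : ∀ t : τ, {i : ℕ | R i ∈ D.part t}.Finite) :
    ∃ ρ : ℕ → τ, T.IsRay ρ ∧ ∀ i : ℕ, ∃ j : ℕ, R j ∈ D.part (ρ i) := by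
  obtain ⟨hinj, hadj⟩ := hR
  choose f hf1 hf2 using fun i => D.edge_in_part (hadj i)
  -- f is a lazy walk in T
  have hstep : ∀ i, f i = f (i + 1) ∨ T.Adj (f i) (f (i + 1)) := by
    intro i
    by_contra h
    push_neg at h
    obtain ⟨hne, hna⟩ := h
    have hdisj := D.nonadj_disjoint hne hna
    have hmem : R (i + 1) ∈ D.part (f i) ∩ D.part (f (i + 1)) := ⟨hf2 i, hf1 (i + 1)⟩
    rw [hdisj] at hmem
    exact hmem
  -- each value of f occurs finitely often
  have hfinf : ∀ t, {n | f n = t}.Finite := fun t =>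
    (hfin t).subset fun n hn => by
      have : R n ∈ D.part (f n) := hf1 n
      simpa [Set.mem_setOf_eq.mp hn] using this
  have hbdd : ∀ m, BddAbove {n | f n = f m} := fun m => ((hfinf (f m)).bddAbove)
  set nxt : ℕ → ℕ := fun m => sSup {n | f n = f m} + 1 with hnxt
  have hlt : ∀ m, m < nxt m := fun m =>
    Nat.lt_succ_of_le (le_csSup (hbdd m) rfl)
  have havoid : ∀ m n, nxt m ≤ n → f n ≠ f m := by
    intro m n hn hfn
    have h1 : n ≤ sSup {n | f n = f m} := le_csSup (hbdd m) hfn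
    simp only [hnxt] at hn
    omega
  have hAdjnxt : ∀ m, T.Adj (f m) (f (nxt m)) := by
    intro m
    have hne : {n | f n = f m}.Nonempty := ⟨m, rfl⟩
    have hs : f (sSup {n | f n = f m}) = f m := Nat.sSup_mem hne (hbdd m)
    rcases hstep (sSup {n | f n = f m}) with heq | hAdj
    · exact absurd (heq.symm.trans hs) (havoid m _ le_rfl)
    · rw [hs] at hAdj
      exact hAdj
  -- the jump sequence
  set g : ℕ → ℕ := fun k => Nat.rec (motive := fun _ => ℕ) 0 (fun _ m => nxt m) k with hg
  have hgs : ∀ k, g (k + 1) = nxt (g k) := fun k => rfl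
  have hmono : StrictMono g := strictMono_nat_of_lt_succ fun k => by
    rw [hgs]; exact hlt (g k)
  have hkey : ∀ j k, j < k → f (g k) ≠ f (g j) := by
    intro j k hjk
    have h1 : g (j + 1) ≤ g k := hmono.monotone (Nat.succ_le_of_lt hjk)
    rw [hgs] at h1
    exact havoid (g j) (g k) h1
  refine ⟨fun k => f (g k), ⟨?_, fun k => ?_⟩, fun i => ⟨g i, hf1 (g i)⟩⟩
  · intro a b hab
    rcases lt_trichotomy a b with h | h | h
    · exact absurd hab.symm (hkey a b h)
    · exact h
    · exact absurd hab (hkey b a h)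
  · exact hAdjnxt (g k)
end
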